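/- Let 0 < p_- ≤ p_n < q_n < ∞ for all n and assume limsup_{n→∞} 1/(1/p_n - 1/q_n) < ∞. Then the embedding id: ℓ_{p_n} → ℓ_{q_n} is finitely strictly singular, and moreover b_n(id) ≤ C n^{-β} for some positive constants C, β. -/

import Mathlib

open scoped ENNReal

/-- Luxemburg quasi-norm of `ℓ_{p_n}` (finite exponents), `∞` if no admissible `λ`. -/
noncomputable def vNorm (p : ℕ → ℝ) (a : ℕ → ℝ) : ℝ≥0∞ :=
  sInf {l : ℝ≥0∞ | 0 < l ∧ l ≠ ⊤ ∧
    (∑' n, ENNReal.ofReal ((|a n| / l.toReal) ^ p n)) ≤ 1}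

/-- `n`-th Bernstein number of the natural embedding `id : ℓ_{p_n} → ℓ_{q_n}`. -/
noncomputable def bern (p q : ℕ → ℝ) (n : ℕ) : ℝ≥0∞ :=
  ⨆ E : {E : Submodule ℝ (ℕ → ℝ) //
      Module.finrank ℝ E = n ∧ ∀ a ∈ E, vNorm p a ≠ ⊤},
    ⨅ a : {a : ℕ → ℝ // a ∈ E.1 ∧ vNorm p a = 1}, vNorm q a.1

/-- The natural embedding `id : ℓ_{p_n} → ℓ_{q_n}` is finitely strictly singular:
for every `ε > 0` there is `N` such that every subspace of `ℓ_{p_n}` of dimension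
at least `N` contains a normalized element with `‖a‖_{q_n} ≤ ε`. -/
def FinStrictlySingularEmb (p q : ℕ → ℝ) : Prop :=
  ∀ ε : ℝ, 0 < ε → ∃ N : ℕ, ∀ E : Submodule ℝ (ℕ → ℝ),
    (∀ a ∈ E, vNorm p a ≠ ⊤) → (N : Cardinal) ≤ Module.rank ℝ E →
    ∃ a ∈ E, vNorm p a = 1 ∧ vNorm q a ≤ ENNReal.ofReal ε

section Basic

variable {p : ℕ → ℝ} {a : ℕ → ℝ}

lemma vNorm_le_of_modular {μ : ℝ} (hμ : 0 < μ)
    (h : (∑' n, ENNReal.ofReal ((|a n| / μ) ^ p n)) ≤ 1) :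
    vNorm p a ≤ ENNReal.ofReal μ := by
  apply sInf_le
  refine ⟨ENNReal.ofReal_pos.2 hμ, ENNReal.ofReal_ne_top, ?_⟩
  rwa [ENNReal.toReal_ofReal hμ.le]

lemma coord_le_of_modular (hp : ∀ n, 0 < p n) {μ : ℝ} (hμ : 0 < μ)
    (h : (∑' n, ENNReal.ofReal ((|a n| / μ) ^ p n)) ≤ 1) (i : ℕ) :
    |a i| ≤ μ := by
  have h1 : ENNReal.ofReal ((|a i| / μ) ^ p i) ≤ 1 := le_trans (ENNReal.le_tsum i) h
  rw [ENNReal.ofReal_le_one] at h1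
  rcases eq_or_lt_of_le (abs_nonneg (a i)) with h0 | h0
  · linarith [hμ, h0.symm.le]
  by_contra hc
  push_neg at hc
  have hr : 1 < |a i| / μ := (one_lt_div hμ).2 hc
  have := (Real.one_lt_rpow_iff_of_pos (lt_trans one_pos hr)).2 (Or.inl ⟨hr, hp i⟩)
  linarith

lemma ofReal_coord_le_vNorm (i : ℕ) (hp : ∀ n, 0 < p n) :
    ENNReal.ofReal (|a i|) ≤ vNorm p a := by
  apply le_sInf
  rintro l ⟨hl0, hlt, hsum⟩
  have := coord_le_of_modular hp (ENNReal.toReal_pos hl0.ne' hlt) hsum i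
  calc ENNReal.ofReal (|a i|) ≤ ENNReal.ofReal l.toReal := ENNReal.ofReal_le_ofReal this
    _ = l := ENNReal.ofReal_toReal hlt

lemma vNorm_pos_of_ne_zero (hp : ∀ n, 0 < p n) (ha : a ≠ 0) : 0 < vNorm p a := by
  obtain ⟨i, hi⟩ : ∃ i, a i ≠ 0 := by
    by_contra h; push_neg at h; exact ha (funext h)
  exact lt_of_lt_of_le (ENNReal.ofReal_pos.2 (abs_pos.2 hi)) (ofReal_coord_le_vNorm i hp)

lemma vNorm_smul_le {t : ℝ} (ht : 0 < t) :
    vNorm p (t • a) ≤ ENNReal.ofReal t * vNorm p a := by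
  rcases eq_or_ne (vNorm p a) ⊤ with h | h
  · rw [h, ENNReal.mul_top (by simpa using (ENNReal.ofReal_pos.2 ht).ne')]
    exact le_top
  have key : vNorm p (t • a) ≤ ⨅ l : {l : ℝ≥0∞ // l ∈ {l : ℝ≥0∞ | 0 < l ∧ l ≠ ⊤ ∧
      (∑' n, ENNReal.ofReal ((|a n| / l.toReal) ^ p n)) ≤ 1}}, ENNReal.ofReal t * l.1 := by
    apply le_iInf
    rintro ⟨l, hl0, hlt, hsum⟩
    apply sInf_le
    have hlr : (ENNReal.ofReal t * l).toReal = t * l.toReal := by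
      rw [ENNReal.toReal_mul, ENNReal.toReal_ofReal ht.le]
    refine ⟨ENNReal.mul_pos (ENNReal.ofReal_pos.2 ht).ne' hl0.ne', ENNReal.mul_ne_top ENNReal.ofReal_ne_top hlt, ?_⟩
    rw [hlr]
    have : ∀ n, (|(t • a) n| / (t * l.toReal)) ^ p n = (|a n| / l.toReal) ^ p n := by
      intro n
      congr 1
      rw [Pi.smul_apply, smul_eq_mul, abs_mul, abs_of_pos ht, mul_div_mul_left _ _ ht.ne']
    simpa only [this] using hsum
  rcases isEmpty_or_nonempty {l : ℝ≥0∞ // l ∈ {l : ℝ≥0∞ | 0 < l ∧ l ≠ ⊤ ∧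
      (∑' n, ENNReal.ofReal ((|a n| / l.toReal) ^ p n)) ≤ 1}} with he | hne
  · rw [vNorm, sInf_eq_iInf', iInf_of_empty] at h; exact absurd rfl h
  rw [← ENNReal.mul_iInf_of_ne (by simpa using (ENNReal.ofReal_pos.2 ht).ne') ENNReal.ofReal_ne_top] at key
  conv_rhs => rw [vNorm, sInf_eq_iInf']
  exact key

lemma vNorm_smul {t : ℝ} (ht : 0 < t) :
    vNorm p (t • a) = ENNReal.ofReal t * vNorm p a := by
  refine le_antisymm (vNorm_smul_le ht) ?_
  have h2 := vNorm_smul_le (p := p) (a := t • a) (t := t⁻¹) (inv_pos.2 ht)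
  rw [smul_smul, inv_mul_cancel₀ ht.ne', one_smul] at h2
  calc ENNReal.ofReal t * vNorm p a
      ≤ ENNReal.ofReal t * (ENNReal.ofReal t⁻¹ * vNorm p (t • a)) := by
        exact mul_le_mul_right h2 _
    _ = vNorm p (t • a) := by
        rw [← mul_assoc, ← ENNReal.ofReal_mul ht.le, mul_inv_cancel₀ ht.ne',
          ENNReal.ofReal_one, one_mul]

end Basic

section Basic2

variable {p q : ℕ → ℝ} {a : ℕ → ℝ}

lemma modular_le_one_of_vNorm_eq_one (hp : ∀ n, 0 < p n) (h : vNorm p a = 1) :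
    (∑' n, ENNReal.ofReal (|a n| ^ p n)) ≤ 1 := by
  by_contra hc
  push_neg at hc
  rw [ENNReal.tsum_eq_iSup_sum, lt_iSup_iff] at hc
  obtain ⟨F, hF⟩ := hc
  rw [← ENNReal.ofReal_sum_of_nonneg (fun i _ => Real.rpow_nonneg (abs_nonneg _) _)] at hF
  set c : ℝ := ∑ i ∈ F, |a i| ^ p i with hc_def
  have hc1 : 1 < c := by
    by_contra hcc
    push_neg at hcc
    exact absurd (le_trans (ENNReal.ofReal_le_ofReal hcc) (by simp)) (not_le.2 hF)
  set P : ℝ := 1 + ∑ i ∈ F, p i with hP_def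
  have hP0 : 0 < P := by
    have : (0:ℝ) ≤ ∑ i ∈ F, p i := Finset.sum_nonneg fun i _ => (hp i).le
    simp only [hP_def]; linarith
  have hPle : ∀ i ∈ F, p i ≤ P := by
    intro i hi
    have := Finset.single_le_sum (f := p) (fun j _ => (hp j).le) hi
    simp only [hP_def]; linarith
  have key : ∀ l ∈ {l : ℝ≥0∞ | 0 < l ∧ l ≠ ⊤ ∧
      (∑' n, ENNReal.ofReal ((|a n| / l.toReal) ^ p n)) ≤ 1},
      ENNReal.ofReal (c ^ P⁻¹) ≤ l := by
    rintro l ⟨hl0, hlt, hsum⟩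
    set L := l.toReal with hL_def
    have hL0 : 0 < L := ENNReal.toReal_pos hl0.ne' hlt
    have hFsum : (∑ i ∈ F, (|a i| / L) ^ p i) ≤ 1 := by
      have h1 : (∑ i ∈ F, ENNReal.ofReal ((|a i| / L) ^ p i)) ≤ 1 :=
        le_trans (ENNReal.sum_le_tsum F) hsum
      rw [← ENNReal.ofReal_sum_of_nonneg
        (fun i _ => Real.rpow_nonneg (by positivity) _), ENNReal.ofReal_le_one] at h1
      exact h1
    rcases le_or_gt L 1 with hL1 | hL1
    · exfalso
      have : c ≤ ∑ i ∈ F, (|a i| / L) ^ p i := by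
        apply Finset.sum_le_sum
        intro i hi
        exact Real.rpow_le_rpow (abs_nonneg _)
          ((le_div_iff₀ hL0).2 (by nlinarith [abs_nonneg (a i)])) (hp i).le
      linarith
    · have hstep : ∀ i ∈ F, |a i| ^ p i / L ^ P ≤ (|a i| / L) ^ p i := by
        intro i hi
        rw [Real.div_rpow (abs_nonneg _) hL0.le]
        apply div_le_div_of_nonneg_left (Real.rpow_nonneg (abs_nonneg _) _) (by positivity)
        exact Real.rpow_le_rpow_of_exponent_le hL1.le (hPle i hi)
      have h2 : c / L ^ P ≤ 1 := by
        rw [hc_def, Finset.sum_div]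
        exact le_trans (Finset.sum_le_sum hstep) hFsum
      have h3 : c ≤ L ^ P := (div_le_one (by positivity)).1 h2
      have h4 : c ^ P⁻¹ ≤ L := by
        calc c ^ P⁻¹ ≤ (L ^ P) ^ P⁻¹ :=
              Real.rpow_le_rpow (by linarith) h3 (by positivity)
          _ = L := by
              rw [← Real.rpow_mul hL0.le, mul_inv_cancel₀ hP0.ne', Real.rpow_one]
      calc ENNReal.ofReal (c ^ P⁻¹) ≤ ENNReal.ofReal L := ENNReal.ofReal_le_ofReal h4
        _ = l := ENNReal.ofReal_toReal hlt
  have : ENNReal.ofReal (c ^ P⁻¹) ≤ 1 := h ▸ le_sInf key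
  rw [ENNReal.ofReal_le_one] at this
  have : 1 < c ^ P⁻¹ :=
    (Real.one_lt_rpow_iff_of_pos (by linarith)).2 (Or.inl ⟨hc1, by positivity⟩)
  linarith

end Basic2

section Basic3

variable {p q : ℕ → ℝ} {a : ℕ → ℝ}

lemma coord_le_one_of_vNorm_eq_one (hp : ∀ n, 0 < p n) (h : vNorm p a = 1) (i : ℕ) :
    |a i| ≤ 1 := by
  have := modular_le_one_of_vNorm_eq_one hp h
  refine coord_le_of_modular hp one_pos ?_ i
  simpa only [div_one] using this

lemma vNorm_le_one_of_le (hp : ∀ n, 0 < p n) (hpq : ∀ n, p n ≤ q n)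
    (h : vNorm p a = 1) : vNorm q a ≤ 1 := by
  have hmod := modular_le_one_of_vNorm_eq_one hp h
  have hco := coord_le_one_of_vNorm_eq_one hp h
  have : (∑' n, ENNReal.ofReal ((|a n| / 1) ^ q n)) ≤ 1 := by
    refine le_trans (ENNReal.tsum_le_tsum fun i => ?_) hmod
    simp only [div_one]
    apply ENNReal.ofReal_le_ofReal
    rcases eq_or_lt_of_le (abs_nonneg (a i)) with h0 | h0
    · rw [← h0, Real.zero_rpow (lt_of_lt_of_le (hp i) (hpq i)).ne',
        Real.zero_rpow (hp i).ne']
    · exact Real.rpow_le_rpow_of_exponent_ge h0 (hco i) (hpq i)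
  simpa using vNorm_le_of_modular one_pos this

lemma exists_smul_unit (hp : ∀ n, 0 < p n) (ha : a ≠ 0) (hfin : vNorm p a ≠ ⊤) :
    ∃ t : ℝ, 0 < t ∧ vNorm p (t • a) = 1 := by
  have hpos := vNorm_pos_of_ne_zero hp ha
  set c := vNorm p a with hc
  have hct : 0 < c.toReal := ENNReal.toReal_pos hpos.ne' hfin
  refine ⟨c.toReal⁻¹, inv_pos.2 hct, ?_⟩
  rw [vNorm_smul (inv_pos.2 hct), ← hc]
  calc ENNReal.ofReal c.toReal⁻¹ * c
      = ENNReal.ofReal c.toReal⁻¹ * ENNReal.ofReal c.toReal := by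
        rw [ENNReal.ofReal_toReal hfin]
    _ = 1 := by
        rw [← ENNReal.ofReal_mul (inv_nonneg.2 hct.le), inv_mul_cancel₀ hct.ne',
          ENNReal.ofReal_one]

lemma coords_small_of_fin (hp : ∀ n, 0 < p n) {K : ℝ} {N₀ : ℕ}
    (hpK : ∀ i, N₀ ≤ i → p i ≤ K) (hK1 : 1 ≤ K) (hfin : vNorm p a ≠ ⊤) :
    ∀ ε : ℝ, 0 < ε → ∃ M : ℕ, ∀ i, M ≤ i → |a i| ≤ ε := by
  intro ε hε
  have hS : {l : ℝ≥0∞ | 0 < l ∧ l ≠ ⊤ ∧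
      (∑' n, ENNReal.ofReal ((|a n| / l.toReal) ^ p n)) ≤ 1}.Nonempty := by
    by_contra hc
    rw [Set.not_nonempty_iff_eq_empty] at hc
    exact hfin (by rw [vNorm, hc, sInf_empty])
  obtain ⟨l, hl0, hlt, hsum⟩ := hS
  set L := l.toReal with hL
  have hL0 : 0 < L := ENNReal.toReal_pos hl0.ne' hlt
  set m : ℝ := min (ε / L) 1 with hm
  have hm0 : 0 < m := lt_min (div_pos hε hL0) one_pos
  have hm1 : m ≤ 1 := min_le_right _ _
  have htz : Filter.Tendsto (fun n => ENNReal.ofReal ((|a n| / L) ^ p n))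
      Filter.atTop (nhds 0) :=
    ENNReal.tendsto_atTop_zero_of_tsum_ne_top (lt_of_le_of_lt hsum (by simp)).ne
  have hev : ∀ᶠ i in Filter.atTop,
      ENNReal.ofReal ((|a i| / L) ^ p i) < ENNReal.ofReal (m ^ K) := by
    apply htz.eventually_lt_const
    exact ENNReal.ofReal_pos.2 (Real.rpow_pos_of_pos hm0 _)
  obtain ⟨M, hM⟩ := Filter.eventually_atTop.1 hev
  refine ⟨max M N₀, fun i hi => ?_⟩
  have hiM := le_trans (le_max_left M N₀) hi
  have hiN := le_trans (le_max_right M N₀) hi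
  have hterm := hM i hiM
  set r : ℝ := |a i| / L with hr
  have hr0 : 0 ≤ r := by positivity
  have hrm : r ≤ m := by
    by_contra hc
    push_neg at hc
    have hkey : m ^ K ≤ r ^ p i := by
      rcases le_or_gt 1 r with h1 | h1
      · calc m ^ K ≤ 1 := Real.rpow_le_one hm0.le hm1 (by linarith)
          _ ≤ r ^ p i := Real.one_le_rpow h1 (hp i).le
      · calc m ^ K ≤ r ^ K := Real.rpow_le_rpow hm0.le hc.le (by linarith)
          _ ≤ r ^ p i := Real.rpow_le_rpow_of_exponent_ge (lt_trans hm0 hc) h1.le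
              (hpK i hiN)
    exact absurd (ENNReal.ofReal_le_ofReal hkey) (not_le.2 hterm)
  have : |a i| ≤ m * L := by
    rw [hr] at hrm
    calc |a i| = |a i| / L * L := by field_simp
      _ ≤ m * L := by nlinarith
  calc |a i| ≤ m * L := this
    _ ≤ ε / L * L := by nlinarith [min_le_left (ε / L) 1]
    _ = ε := by field_simp

end Basic3

section Core2

variable {p q : ℕ → ℝ} {a : ℕ → ℝ}

lemma vNorm_q_bound_of_flat (hp : ∀ n, 0 < p n) (hpq : ∀ n, p n < q n)
    {K θ : ℝ} {N₀ : ℕ} (hK1 : 1 ≤ K) (hpK : ∀ i, N₀ ≤ i → p i ≤ K)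
    (hθ0 : 0 < θ) (hθ : ∀ i, θ ≤ 1 - p i / q i)
    (h1 : vNorm p a = 1) {M : ℝ} (hM0 : 0 < M)
    (hMle : ∀ i, |a i| ≤ M) {A : Finset ℕ} (hA : ∀ i ∈ A, N₀ ≤ i ∧ |a i| = M)
    {k : ℕ} (hk : k ≤ A.card) (hk1 : 1 ≤ k) :
    vNorm q a ≤ ENNReal.ofReal ((k : ℝ) ^ (-(θ / K))) := by
  have hq : ∀ n, 0 < q n := fun n => lt_trans (hp n) (hpq n)
  have hmod := modular_le_one_of_vNorm_eq_one hp h1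
  -- M ≤ 1
  obtain ⟨i₀, hi₀⟩ : A.Nonempty := Finset.card_pos.1 (lt_of_lt_of_le hk1 hk)
  have hM1 : M ≤ 1 := (hA i₀ hi₀).2 ▸ coord_le_one_of_vNorm_eq_one hp h1 i₀
  have hK0 : 0 < K := lt_of_lt_of_le one_pos hK1
  -- k * M^K ≤ 1
  have hcard : (A.card : ℝ) * M ^ K ≤ 1 := by
    have hterm : ∀ i ∈ A, ENNReal.ofReal (M ^ K) ≤ ENNReal.ofReal (|a i| ^ p i) := by
      intro i hi
      apply ENNReal.ofReal_le_ofReal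
      rw [(hA i hi).2]
      exact Real.rpow_le_rpow_of_exponent_ge hM0 hM1 (hpK i (hA i hi).1)
    have hsum : (A.card : ℝ≥0∞) * ENNReal.ofReal (M ^ K) ≤ 1 := by
      calc (A.card : ℝ≥0∞) * ENNReal.ofReal (M ^ K)
          = ∑ i ∈ A, ENNReal.ofReal (M ^ K) := by
            rw [Finset.sum_const, nsmul_eq_mul]
        _ ≤ ∑ i ∈ A, ENNReal.ofReal (|a i| ^ p i) := Finset.sum_le_sum hterm
        _ ≤ ∑' i, ENNReal.ofReal (|a i| ^ p i) := ENNReal.sum_le_tsum A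
        _ ≤ 1 := hmod
    have heq : ENNReal.ofReal ((A.card : ℝ) * M ^ K)
        = (A.card : ℝ≥0∞) * ENNReal.ofReal (M ^ K) := by
      rw [ENNReal.ofReal_mul (by positivity : (0:ℝ) ≤ (A.card:ℝ)), ENNReal.ofReal_natCast]
    exact ENNReal.ofReal_le_one.1 (le_trans (le_of_eq heq) hsum)
  have hkM : (k : ℝ) * M ^ K ≤ 1 := by
    have hkc : (k : ℝ) ≤ A.card := Nat.cast_le.2 hk
    nlinarith [Real.rpow_pos_of_pos hM0 K]
  have hk0 : (0:ℝ) < k := by exact_mod_cast hk1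
  -- M ≤ k ^ (-K⁻¹)
  have hMk : M ≤ (k : ℝ) ^ (-K⁻¹) := by
    have h3 : M ^ K ≤ (k:ℝ)⁻¹ := by
      rw [← one_div]
      exact (le_div_iff₀ hk0).2 (by nlinarith)
    calc M = (M ^ K) ^ K⁻¹ := by
          rw [← Real.rpow_mul hM0.le, mul_inv_cancel₀ hK0.ne', Real.rpow_one]
      _ ≤ ((k:ℝ)⁻¹) ^ K⁻¹ := Real.rpow_le_rpow (by positivity) h3 (by positivity)
      _ = (k : ℝ) ^ (-K⁻¹) := by
          rw [← Real.rpow_neg_one (k:ℝ), ← Real.rpow_mul (by positivity)]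
          norm_num
  -- modular estimate at scale μ = M ^ θ
  set μ : ℝ := M ^ θ with hμdef
  have hμ0 : 0 < μ := Real.rpow_pos_of_pos hM0 _
  have hmodq : (∑' n, ENNReal.ofReal ((|a n| / μ) ^ q n)) ≤ 1 := by
    refine le_trans (ENNReal.tsum_le_tsum fun i => ENNReal.ofReal_le_ofReal ?_) hmod
    rcases eq_or_lt_of_le (abs_nonneg (a i)) with h0 | hrpos
    · rw [← h0]
      rw [zero_div, Real.zero_rpow (hq i).ne', Real.zero_rpow (hp i).ne']
    · have hqi := hq i
      have hsub : θ * q i ≤ q i - p i := by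
        have hd : p i / q i * q i = p i := div_mul_cancel₀ _ hqi.ne'
        nlinarith [hθ i]
      have hfrac : |a i| ^ (q i - p i) ≤ M ^ (θ * q i) :=
        le_trans (Real.rpow_le_rpow hrpos.le (hMle i) (by linarith [hpq i]))
          (Real.rpow_le_rpow_of_exponent_ge hM0 hM1 hsub)
      have e2 : |a i| ^ q i = |a i| ^ p i * |a i| ^ (q i - p i) := by
        rw [← Real.rpow_add hrpos]; ring_nf
      calc (|a i| / μ) ^ q i = |a i| ^ q i / M ^ (θ * q i) := by
            rw [Real.div_rpow (abs_nonneg _) hμ0.le, hμdef, ← Real.rpow_mul hM0.le]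
        _ = |a i| ^ p i * (|a i| ^ (q i - p i) / M ^ (θ * q i)) := by rw [e2]; ring
        _ ≤ |a i| ^ p i * 1 := by
            apply mul_le_mul_of_nonneg_left _ (Real.rpow_nonneg (abs_nonneg _) _)
            rw [div_le_one (Real.rpow_pos_of_pos hM0 _)]
            exact hfrac
        _ = |a i| ^ p i := mul_one _
  have hfinal := vNorm_le_of_modular hμ0 hmodq
  refine le_trans hfinal (ENNReal.ofReal_le_ofReal ?_)
  calc μ ≤ ((k:ℝ) ^ (-K⁻¹)) ^ θ :=
        Real.rpow_le_rpow hM0.le hMk hθ0.le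
    _ = (k : ℝ) ^ (-(θ / K)) := by
        rw [← Real.rpow_mul hk0.le]
        congr 1
        field_simp

end Core2

section FlatPrep

lemma exists_bound_of_vNorm_ne_top {p a : ℕ → ℝ} (hp : ∀ n, 0 < p n)
    (hfin : vNorm p a ≠ ⊤) : ∃ C : ℝ, 0 ≤ C ∧ ∀ i, |a i| ≤ C := by
  have hS : {l : ℝ≥0∞ | 0 < l ∧ l ≠ ⊤ ∧
      (∑' n, ENNReal.ofReal ((|a n| / l.toReal) ^ p n)) ≤ 1}.Nonempty := by
    by_contra hc
    rw [Set.not_nonempty_iff_eq_empty] at hc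
    exact hfin (by rw [vNorm, hc, sInf_empty])
  obtain ⟨l, hl0, hlt, hsum⟩ := hS
  have hL0 : 0 < l.toReal := ENNReal.toReal_pos hl0.ne' hlt
  exact ⟨l.toReal, hL0.le, coord_le_of_modular hp hL0 hsum⟩

lemma exists_coord_inj (E : Submodule ℝ (ℕ → ℝ)) [FiniteDimensional ℝ E] :
    ∃ m : ℕ, ∀ a ∈ E, (∀ i, i < m → a i = 0) → a = 0 := by
  set Kf : ℕ → Submodule ℝ (ℕ → ℝ) := fun j =>
    E ⊓ ⨅ i ∈ Finset.range j, LinearMap.ker (LinearMap.proj (R := ℝ)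
      (φ := fun _ : ℕ => ℝ) i) with hKf
  have hmem : ∀ j a, a ∈ Kf j ↔ a ∈ E ∧ ∀ i, i < j → a i = 0 := by
    intro j a
    simp [hKf, Submodule.mem_inf, Submodule.mem_iInf, Finset.mem_range]
  have hanti : ∀ {j j'}, j ≤ j' → Kf j' ≤ Kf j := by
    intro j j' hj a ha
    rw [hmem] at ha ⊢
    exact ⟨ha.1, fun i hi => ha.2 i (lt_of_lt_of_le hi hj)⟩
  have hfd : ∀ j, FiniteDimensional ℝ (Kf j) := fun j =>
    Submodule.finiteDimensional_of_le inf_le_left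
  have hne : (Set.range fun j => Module.finrank ℝ (Kf j)).Nonempty := ⟨_, ⟨0, rfl⟩⟩
  obtain ⟨j₀, hj₀⟩ := Nat.sInf_mem hne
  have hstab : ∀ j, j₀ ≤ j → Kf j = Kf j₀ := by
    intro j hj
    haveI := hfd j₀
    apply Submodule.eq_of_le_of_finrank_le (hanti hj)
    simp only at hj₀
    rw [hj₀]
    exact Nat.sInf_le ⟨j, rfl⟩
  refine ⟨j₀, fun a haE hz => ?_⟩
  have haK : a ∈ Kf j₀ := (hmem j₀ a).2 ⟨haE, hz⟩
  funext i
  rcases le_or_gt (i + 1) j₀ with h | h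
  · exact ((hmem j₀ a).1 haK).2 i h
  · have : a ∈ Kf (i + 1) := (hstab (i + 1) h.le) ▸ haK
    exact ((hmem (i + 1) a).1 this).2 i (Nat.lt_succ_self i)

end FlatPrep

section Flat

open Module

lemma exists_flat (p : ℕ → ℝ) (hp : ∀ n, 0 < p n) {K : ℝ} {N₀ : ℕ}
    (hpK : ∀ i, N₀ ≤ i → p i ≤ K) (hK1 : 1 ≤ K)
    (E : Submodule ℝ (ℕ → ℝ)) {n : ℕ} (hn : 1 ≤ n) (hrank : Module.finrank ℝ E = n)
    (hfin : ∀ a ∈ E, vNorm p a ≠ ⊤) :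
    ∃ x ∈ E, (∀ i, |x i| ≤ 1) ∧
      ∃ A : Finset ℕ, n ≤ A.card ∧ ∀ i ∈ A, |x i| = 1 := by
  classical
  haveI hFD : FiniteDimensional ℝ E := FiniteDimensional.of_finrank_pos (by omega)
  -- basis and concrete linear parametrization
  let b : Basis (Fin n) ℝ E := Module.finBasisOfFinrankEq ℝ E hrank
  let f : (Fin n → ℝ) →ₗ[ℝ] (ℕ → ℝ) := E.subtype.comp (b.equivFun.symm : (Fin n → ℝ) ≃ₗ[ℝ] E).toLinearMap
  have hfmem : ∀ c, f c ∈ E := fun c => (b.equivFun.symm c).2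
  have hfinj : Function.Injective f :=
    (Submodule.injective_subtype E).comp b.equivFun.symm.injective
  -- the "unit ball" B
  set B : Set (Fin n → ℝ) := {c | ∀ i, |f c i| ≤ 1} with hB
  have hBconv : Convex ℝ B := by
    rintro c hc d hd s t hs ht hst i
    have : f (s • c + t • d) i = s * f c i + t * f d i := by
      simp [map_add, map_smul]
    rw [this]
    calc |s * f c i + t * f d i| ≤ |s * f c i| + |t * f d i| := abs_add_le _ _
      _ = s * |f c i| + t * |f d i| := by
          rw [abs_mul, abs_mul, abs_of_nonneg hs, abs_of_nonneg ht]
      _ ≤ s * 1 + t * 1 := by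
          have := hc i; have := hd i
          apply add_le_add <;> nlinarith
      _ = 1 := by linarith
  have hBclosed : IsClosed B := by
    have : B = ⋂ i : ℕ, (fun c => f c i) ⁻¹' (Set.Icc (-1:ℝ) 1) := by
      ext c
      simp only [hB, Set.mem_setOf_eq, Set.mem_iInter, Set.mem_preimage, Set.mem_Icc, abs_le]
    rw [this]
    exact isClosed_iInter fun i =>
      (isClosed_Icc).preimage ((LinearMap.proj i ∘ₗ f).continuous_of_finiteDimensional)
  -- boundedness via finitely many coordinates
  obtain ⟨m, hm⟩ := exists_coord_inj E
  let g : (Fin n → ℝ) →ₗ[ℝ] (Fin m → ℝ) :=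
    LinearMap.pi fun j : Fin m => (LinearMap.proj (R := ℝ) (φ := fun _ : ℕ => ℝ) (j : ℕ)) ∘ₗ f
  have hginj : Function.Injective g := by
    rw [← LinearMap.ker_eq_bot]
    rw [Submodule.eq_bot_iff]
    intro c hc
    rw [LinearMap.mem_ker] at hc
    have hzero : ∀ i, i < m → f c i = 0 := by
      intro i hi
      exact congrFun hc ⟨i, hi⟩
    exact hfinj (by rw [hm (f c) (hfmem c) hzero, map_zero])
  let eqv := LinearEquiv.ofInjective g hginj
  let T := LinearMap.toContinuousLinearMap eqv.symm.toLinearMap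
  have hBbdd : Bornology.IsBounded B := by
    apply (Metric.isBounded_closedBall (x := (0 : Fin n → ℝ)) (r := ‖T‖)).subset
    intro c hc
    rw [Metric.mem_closedBall, dist_zero_right]
    have h1 : c = T (eqv c) := by
      simp [T, eqv, LinearEquiv.symm_apply_apply]
    have h2 : ‖eqv c‖ ≤ 1 := by
      rw [Submodule.coe_norm, LinearEquiv.ofInjective_apply]
      rw [pi_norm_le_iff_of_nonneg zero_le_one]
      intro j
      exact hc (j : ℕ)
    calc ‖c‖ = ‖T (eqv c)‖ := by rw [← h1]
      _ ≤ ‖T‖ * ‖eqv c‖ := T.le_opNorm _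
      _ ≤ ‖T‖ * 1 := by nlinarith [norm_nonneg T, norm_nonneg (eqv c)]
      _ = ‖T‖ := mul_one _
  have hBcomp : IsCompact B := Metric.isCompact_of_isClosed_isBounded hBclosed hBbdd
  obtain ⟨cs, hcsB, hext⟩ := hBcomp.extremePoints_nonempty ⟨0, by simp [hB]⟩
  set x : ℕ → ℝ := f cs with hx
  -- coordinates eventually small
  obtain ⟨M₁, hM₁⟩ := coords_small_of_fin hp hpK hK1 (hfin x (hfmem cs)) (1/2) (by norm_num)
  set A : Finset ℕ := (Finset.range M₁).filter (fun i => |x i| = 1) with hA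
  have hApeaks : ∀ i, |x i| = 1 → i ∈ A := by
    intro i hi
    rw [hA, Finset.mem_filter, Finset.mem_range]
    refine ⟨?_, hi⟩
    by_contra hc
    push_neg at hc
    have := hM₁ i hc
    rw [hi] at this; norm_num at this
  have hcard : n ≤ A.card := by
    by_contra hcd
    push_neg at hcd
    -- find e ≠ 0 vanishing on A
    let gA : (Fin n → ℝ) →ₗ[ℝ] (A → ℝ) :=
      LinearMap.pi fun j : A => (LinearMap.proj (R := ℝ) (φ := fun _ : ℕ => ℝ) (j : ℕ)) ∘ₗ f
    have hker : LinearMap.ker gA ≠ ⊥ := by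
      intro hk
      have hinj := LinearMap.ker_eq_bot.1 hk
      have := LinearMap.finrank_le_finrank_of_injective hinj
      rw [Module.finrank_fin_fun, Module.finrank_pi, Fintype.card_coe] at this
      omega
    obtain ⟨e, heker, he0⟩ := (Submodule.ne_bot_iff _).1 hker
    have heA : ∀ i ∈ A, f e i = 0 := by
      intro i hi
      have := LinearMap.mem_ker.1 heker
      exact congrFun this ⟨i, hi⟩
    obtain ⟨Ce, hCe0, hCe⟩ := exists_bound_of_vNorm_ne_top hp (hfin (f e) (hfmem e))
    set Ce' : ℝ := Ce + 1 with hCe'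
    have hCe'0 : 0 < Ce' := by linarith
    -- bound off-peak coordinates away from 1
    set F : Finset ℕ := (Finset.range M₁).filter (fun i => i ∉ A) with hF
    set s : ℝ := if h : F.Nonempty then max (1/2) (F.sup' h fun i => |x i|) else 1/2 with hs
    have hs_half : (1/2 : ℝ) ≤ s := by
      rw [hs]; split
      · exact le_max_left _ _
      · exact le_refl _
    have hxlt : ∀ i ∈ F, |x i| < 1 := by
      intro i hi
      rcases lt_or_eq_of_le (hcsB i) with h | h
      · exact h
      · exact absurd (hApeaks i h) (Finset.mem_filter.1 hi).2
    have hs1 : s < 1 := by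
      rw [hs]; split
      · rename_i h
        apply max_lt (by norm_num)
        rw [Finset.sup'_lt_iff]
        exact hxlt
      · norm_num
    have hsoff : ∀ i, i ∉ A → |x i| ≤ s := by
      intro i hiA
      rcases lt_or_ge i M₁ with h | h
      · have hiF : i ∈ F := by
          rw [hF, Finset.mem_filter, Finset.mem_range]; exact ⟨h, hiA⟩
        have hFne : F.Nonempty := ⟨i, hiF⟩
        rw [hs, dif_pos hFne]
        exact le_trans (Finset.le_sup' (fun i => |x i|) hiF) (le_max_right _ _)
      · exact le_trans (hM₁ i h) hs_half
    set ε : ℝ := (1 - s) / Ce' with hε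
    have hε0 : 0 < ε := div_pos (by linarith) hCe'0
    have hmemB : ∀ σ : ℝ, |σ| = 1 → cs + (σ * ε) • e ∈ B := by
      intro σ hσ i
      have : f (cs + (σ * ε) • e) i = x i + σ * ε * f e i := by
        simp [map_add, map_smul, hx]
      rw [this]
      rcases Classical.em (i ∈ A) with hiA | hiA
      · rw [heA i hiA, mul_zero, add_zero]
        exact hcsB i
      · have h1 : |x i| ≤ s := hsoff i hiA
        have h2 : |f e i| ≤ Ce' := le_trans (hCe i) (by linarith)
        calc |x i + σ * ε * f e i| ≤ |x i| + |σ * ε * f e i| := abs_add_le _ _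
          _ = |x i| + ε * |f e i| := by
              rw [abs_mul, abs_mul, hσ, abs_of_pos hε0]; ring
          _ ≤ s + ε * Ce' := by
              apply add_le_add h1
              nlinarith
          _ = 1 := by
              rw [hε]; field_simp; ring
    have hplus := hmemB 1 (by norm_num)
    have hminus := hmemB (-1) (by norm_num)
    rw [one_mul] at hplus
    rw [neg_one_mul, neg_smul] at hminus
    have hseg : cs ∈ openSegment ℝ (cs + (-(ε • e))) (cs + ε • e) := by
      refine ⟨1/2, 1/2, by norm_num, by norm_num, by norm_num, ?_⟩
      module
    have := hext (by simpa using hminus) hplus hseg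
    have he00 : ε • e = 0 := by
      have h1 := this
      have : cs + -(ε • e) = cs := h1
      simpa using this
    exact he0 (smul_eq_zero.1 he00 |>.resolve_left hε0.ne')
  refine ⟨x, hfmem cs, fun i => hcsB i, A, hcard, fun i hi => (Finset.mem_filter.1 hi).2⟩

end Flat

section CoreAssemble

variable {p q : ℕ → ℝ}

/-- Core lemma: in any finite-dimensional subspace with all vNorms finite, there is
a normalized element whose q-norm is quantitatively small. -/
lemma core_lemma (hp : ∀ n, 0 < p n) (hpq : ∀ n, p n < q n)
    {K θ : ℝ} {N₀ : ℕ} (hK1 : 1 ≤ K) (hpK : ∀ i, N₀ ≤ i → p i ≤ K)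
    (hθ0 : 0 < θ) (hθ : ∀ i, θ ≤ 1 - p i / q i)
    (E : Submodule ℝ (ℕ → ℝ)) {n : ℕ} (hn : 1 ≤ n)
    (hrank : Module.finrank ℝ E = n) (hfin : ∀ a ∈ E, vNorm p a ≠ ⊤) :
    ∃ a ∈ E, vNorm p a = 1 ∧
      (N₀ < n → vNorm q a ≤ ENNReal.ofReal (((n - N₀ : ℕ) : ℝ) ^ (-(θ / K)))) := by
  classical
  obtain ⟨x, hxE, hxle, A, hAcard, hApk⟩ := exists_flat p hp hpK hK1 E hn hrank hfin
  have hx0 : x ≠ 0 := by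
    obtain ⟨i₀, hi₀⟩ : A.Nonempty := Finset.card_pos.1 (lt_of_lt_of_le hn hAcard)
    intro hc
    have := hApk i₀ hi₀
    rw [hc] at this
    simp at this
  obtain ⟨t, ht0, ht1⟩ := exists_smul_unit hp hx0 (hfin x hxE)
  refine ⟨t • x, E.smul_mem t hxE, ht1, fun hNn => ?_⟩
  set A' : Finset ℕ := A.filter (fun i => N₀ ≤ i) with hA'
  have hA'card : n - N₀ ≤ A'.card := by
    have hsplit := Finset.card_filter_add_card_filter_not
      (s := A) (p := fun i => N₀ ≤ i)
    have hsub : (A.filter (fun i => ¬ N₀ ≤ i)).card ≤ N₀ := by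
      have : A.filter (fun i => ¬ N₀ ≤ i) ⊆ Finset.range N₀ := by
        intro i hi
        rw [Finset.mem_range]
        have := (Finset.mem_filter.1 hi).2
        omega
      calc (A.filter (fun i => ¬ N₀ ≤ i)).card ≤ (Finset.range N₀).card :=
            Finset.card_le_card this
        _ = N₀ := Finset.card_range N₀
    rw [hA']
    omega
  refine vNorm_q_bound_of_flat hp hpq hK1 hpK hθ0 hθ ht1 ht0
    (A := A') (k := n - N₀) ?_ ?_ hA'card (by omega)
  · intro i
    have : |(t • x) i| = t * |x i| := by
      rw [Pi.smul_apply, smul_eq_mul, abs_mul, abs_of_pos ht0]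
    rw [this]
    nlinarith [hxle i, abs_nonneg (x i)]
  · intro i hi
    rw [hA', Finset.mem_filter] at hi
    refine ⟨hi.2, ?_⟩
    have : |(t • x) i| = t * |x i| := by
      rw [Pi.smul_apply, smul_eq_mul, abs_mul, abs_of_pos ht0]
    rw [this, hApk i hi.1, mul_one]

lemma exists_fin_subspace (E : Submodule ℝ (ℕ → ℝ)) {N : ℕ}
    (hrk : (N : Cardinal) ≤ Module.rank ℝ E) :
    ∃ E' : Submodule ℝ (ℕ → ℝ), E' ≤ E ∧ Module.finrank ℝ E' = N := by
  classical
  haveI : Module.Free ℝ ↥E := Module.Free.of_divisionRing ℝ ↥E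
  obtain ⟨s, hscard, hsli⟩ := le_rank_iff_exists_linearIndependent_finset.1 hrk
  set v : {x // x ∈ s} → (ℕ → ℝ) := fun i => ((i : E) : ℕ → ℝ) with hv
  have hli : LinearIndependent ℝ v := by
    have := hsli.map' E.subtype (Submodule.ker_subtype E)
    exact this
  refine ⟨Submodule.span ℝ (Set.range v), ?_, ?_⟩
  · rw [Submodule.span_le]
    rintro _ ⟨i, rfl⟩
    exact ((i : E) : E).2
  · rw [finrank_span_eq_card hli, Fintype.card_coe, hscard]

end CoreAssemble

lemma exists_theta_fin (p q : ℕ → ℝ) (hp : ∀ n, 0 < p n) (hpq : ∀ n, p n < q n)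
    (N₀ : ℕ) : ∃ θ : ℝ, 0 < θ ∧ ∀ i, i < N₀ → θ ≤ 1 - p i / q i := by
  induction N₀ with
  | zero => exact ⟨1, one_pos, fun i hi => absurd hi (Nat.not_lt_zero i)⟩
  | succ N ih =>
    obtain ⟨θ, hθ0, hθ⟩ := ih
    have hqN : 0 < q N := lt_trans (hp N) (hpq N)
    have hNp : 0 < 1 - p N / q N := by
      have : p N / q N < 1 := (div_lt_one hqN).2 (hpq N)
      linarith
    refine ⟨min θ (1 - p N / q N), lt_min hθ0 hNp, fun i hi => ?_⟩
    rcases Nat.lt_succ_iff_lt_or_eq.1 hi with h | h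
    · exact le_trans (min_le_left _ _) (hθ i h)
    · subst h; exact min_le_right _ _


theorem stmt_13 (p q : ℕ → ℝ) (pm : ℝ) (hpm0 : 0 < pm) (hle : ∀ n, pm ≤ p n)
    (hpq : ∀ n, p n < q n)
    (hlimsup : ∃ K : ℝ, ∀ᶠ n in Filter.atTop, 1 / (1 / p n - 1 / q n) ≤ K) :
    FinStrictlySingularEmb p q ∧
      ∃ C β : ℝ, 0 < C ∧ 0 < β ∧ ∀ n : ℕ, 1 ≤ n →
        bern p q n ≤ ENNReal.ofReal (C * (n : ℝ) ^ (-β)) := by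
  have hp : ∀ n, 0 < p n := fun n => lt_of_lt_of_le hpm0 (hle n)
  have hq : ∀ n, 0 < q n := fun n => lt_trans (hp n) (hpq n)
  obtain ⟨K₀, hev⟩ := hlimsup
  obtain ⟨N₀, hN₀⟩ := Filter.eventually_atTop.1 hev
  set K : ℝ := max K₀ 1 with hKdef
  have hK1 : 1 ≤ K := le_max_right _ _
  have hK0 : 0 < K := lt_of_lt_of_le one_pos hK1
  have hd : ∀ i, 0 < 1 / p i - 1 / q i := by
    intro i
    have h1 : 1 / q i < 1 / p i := one_div_lt_one_div_of_lt (hp i) (hpq i)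
    linarith
  have hNK : ∀ i, N₀ ≤ i → 1 / K ≤ 1 / p i - 1 / q i := by
    intro i hi
    have h2 : 1 / (1 / p i - 1 / q i) ≤ K := le_trans (hN₀ i hi) (le_max_left _ _)
    rw [div_le_iff₀ (hd i)] at h2
    rw [div_le_iff₀ hK0]
    nlinarith
  have hpK : ∀ i, N₀ ≤ i → p i ≤ K := by
    intro i hi
    have h1 := hNK i hi
    have h2 : 1 / K ≤ 1 / p i := by
      have := one_div_pos.2 (hq i)
      linarith
    rw [div_le_div_iff₀ hK0 (hp i)] at h2
    linarith
  obtain ⟨θ₁, hθ₁0, hθ₁⟩ := exists_theta_fin p q hp hpq N₀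
  set θ : ℝ := min θ₁ (pm / K) with hθdef
  have hθ0 : 0 < θ := lt_min hθ₁0 (by positivity)
  have hθ : ∀ i, θ ≤ 1 - p i / q i := by
    intro i
    rcases lt_or_ge i N₀ with h | h
    · exact le_trans (min_le_left _ _) (hθ₁ i h)
    · have e : p i * (1 / p i - 1 / q i) = 1 - p i / q i := by
        rw [mul_sub, mul_one_div, mul_one_div, div_self (hp i).ne']
      have hmul : pm * (1 / K) ≤ p i * (1 / p i - 1 / q i) :=
        mul_le_mul (hle i) (hNK i h) (by positivity) (le_trans hpm0.le (hle i))
      calc θ ≤ pm / K := min_le_right _ _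
        _ = pm * (1 / K) := by ring
        _ ≤ p i * (1 / p i - 1 / q i) := hmul
        _ = 1 - p i / q i := e
  set β : ℝ := θ / K with hβdef
  have hβ0 : 0 < β := by positivity
  constructor
  · -- finitely strictly singular
    intro ε hε
    have htend : Filter.Tendsto (fun x : ℝ => x ^ (-β)) Filter.atTop (nhds 0) :=
      tendsto_rpow_neg_atTop hβ0
    have hev2 : ∀ᶠ k : ℕ in Filter.atTop, ((k : ℝ)) ^ (-β) < ε :=
      (htend.comp tendsto_natCast_atTop_atTop).eventually_lt_const hε
    obtain ⟨k₀, hk₀⟩ := Filter.eventually_atTop.1 hev2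
    set k : ℕ := max k₀ 1 with hkdef
    have hk1 : 1 ≤ k := le_max_right _ _
    have hkε : ((k : ℝ)) ^ (-β) ≤ ε := (hk₀ k (le_max_left _ _)).le
    refine ⟨N₀ + k, fun E hfinE hrk => ?_⟩
    obtain ⟨E', hE'le, hE'rank⟩ := exists_fin_subspace E hrk
    have hfin' : ∀ a ∈ E', vNorm p a ≠ ⊤ := fun a ha => hfinE a (hE'le ha)
    obtain ⟨a, haE', ha1, haq⟩ := core_lemma hp hpq hK1 hpK hθ0 hθ E'
      (by omega) hE'rank hfin'
    refine ⟨a, hE'le haE', ha1, ?_⟩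
    have hb := haq (by omega)
    have hsub : N₀ + k - N₀ = k := by omega
    rw [hsub] at hb
    exact le_trans hb (ENNReal.ofReal_le_ofReal hkε)
  · -- Bernstein numbers
    refine ⟨max ((2 * N₀ + 2 : ℝ) ^ β) (2 ^ β), β,
      lt_of_lt_of_le (Real.rpow_pos_of_pos two_pos _) (le_max_right _ _), hβ0, ?_⟩
    intro n hn
    set C : ℝ := max ((2 * N₀ + 2 : ℝ) ^ β) (2 ^ β) with hCdef
    apply iSup_le
    rintro ⟨E, hrank, hfinE⟩
    obtain ⟨a, haE, ha1, haq⟩ := core_lemma hp hpq hK1 hpK hθ0 hθ E hn hrank hfinE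
    have hn1 : (1:ℝ) ≤ (n:ℝ) := by exact_mod_cast hn
    have hn0 : (0:ℝ) < (n:ℝ) := by linarith
    refine le_trans (iInf_le _ ⟨a, haE, ha1⟩) ?_
    rcases le_or_gt n (2 * N₀ + 1) with hsmall | hbig
    · refine le_trans (vNorm_le_one_of_le hp (fun i => (hpq i).le) ha1) ?_
      rw [← ENNReal.ofReal_one]
      apply ENNReal.ofReal_le_ofReal
      have hcast : (n : ℝ) ≤ 2 * N₀ + 2 := by
        have : (n:ℝ) ≤ (2 * N₀ + 1 : ℕ) := by exact_mod_cast hsmall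
        push_cast at this
        linarith
      have hnb : (n:ℝ) ^ β ≤ (2 * N₀ + 2 : ℝ) ^ β :=
        Real.rpow_le_rpow (by positivity) hcast hβ0.le
      have hC : (n:ℝ) ^ β ≤ C := le_trans hnb (le_max_left _ _)
      calc (1:ℝ) = (n:ℝ) ^ β * (n:ℝ) ^ (-β) := by
            rw [← Real.rpow_add hn0]; simp
        _ ≤ C * (n:ℝ) ^ (-β) :=
            mul_le_mul_of_nonneg_right hC (Real.rpow_nonneg hn0.le _)
    · have hb := haq (by omega)
      refine le_trans hb (ENNReal.ofReal_le_ofReal ?_)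
      have hcast : ((n - N₀ : ℕ) : ℝ) = (n:ℝ) - (N₀:ℝ) := by
        rw [Nat.cast_sub (by omega)]
      have hge : (2 * N₀ + 2 : ℝ) ≤ (n : ℝ) := by
        have : ((2 * N₀ + 2 : ℕ) : ℝ) ≤ (n:ℝ) := by exact_mod_cast hbig
        push_cast at this
        linarith
      have h1 : (n:ℝ) / 2 ≤ ((n - N₀ : ℕ) : ℝ) := by
        rw [hcast]
        linarith
      have h2 : ((n - N₀ : ℕ) : ℝ) ^ (-β) ≤ ((n:ℝ) / 2) ^ (-β) :=
        Real.rpow_le_rpow_of_nonpos (by positivity) h1 (by linarith)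
      have h3 : ((n:ℝ) / 2) ^ (-β) = 2 ^ β * (n:ℝ) ^ (-β) := by
        have h2b : (0:ℝ) < 2 ^ β := Real.rpow_pos_of_pos two_pos _
        rw [Real.div_rpow hn0.le (by norm_num : (0:ℝ) ≤ 2),
          Real.rpow_neg (by norm_num : (0:ℝ) ≤ 2)]
        field_simp
      calc ((n - N₀ : ℕ) : ℝ) ^ (-β) ≤ ((n:ℝ) / 2) ^ (-β) := h2
        _ = 2 ^ β * (n:ℝ) ^ (-β) := h3
        _ ≤ C * (n:ℝ) ^ (-β) :=
            mul_le_mul_of_nonneg_right (le_max_right _ _) (Real.rpow_nonneg hn0.le _)
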